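/- For every n ≥ 1, there is an explicit bijection (in particular, a bijection exists) between Dyck paths of length 2n and 2-coloured Motzkin paths of length n−1: delete the first up-step and the last down-step and encode the remaining 2n−2 steps pairwise, sending an up-up pair to an up-step, a down-down pair to a down-step, an up-down pair to a red horizontal step, and a down-up pair to a green horizontal step. -/
import Mathlib


/-- The two colours for horizontal steps. -/
inductive Colour : Type
  | red : Colour
  | green : Colour

/-- A step of a 2-coloured Motzkin path: an up-step, a down-step, or a horizontal
step coloured red or green. -/
inductive Step2 : Type
  | up : Step2
  | down : Step2
  | level : Colour → Step2

/-- The value (height change) of a 2-coloured Motzkin step. -/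
def Step2.val : Step2 → ℤ
  | .up => 1
  | .down => -1
  | .level _ => 0

/-- A step of a Dyck path: an up-step or a down-step. -/
inductive StepUD : Type
  | up : StepUD
  | down : StepUD

/-- The value (height change) of a Dyck step. -/
def StepUD.val : StepUD → ℤ
  | .up => 1
  | .down => -1

/-- A list of steps is a 2-coloured Motzkin path if every prefix sum of the values
is nonnegative and the total sum is `0`. -/
def IsMotzkin2 (l : List Step2) : Prop :=
  (∀ t : List Step2, t <+: l → 0 ≤ (t.map Step2.val).sum) ∧ (l.map Step2.val).sum = 0

/-- A list of up/down steps is a Dyck path if every prefix sum of the values is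
nonnegative and the total sum is `0`. -/
def IsDyck (l : List StepUD) : Prop :=
  (∀ t : List StepUD, t <+: l → 0 ≤ (t.map StepUD.val).sum) ∧ (l.map StepUD.val).sum = 0

/-- A pair of Dyck steps is encoded as a single 2-coloured Motzkin step:
up-up ↦ up, down-down ↦ down, up-down ↦ red horizontal, down-up ↦ green horizontal. -/
def encodePair : StepUD → StepUD → Step2
  | .up, .up => .up
  | .down, .down => .down
  | .up, .down => .level .red
  | .down, .up => .level .green

/-- Encode a list of Dyck steps pairwise. -/
def encodePairs : List StepUD → List Step2
  | a :: b :: rest => encodePair a b :: encodePairs rest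
  | _ => []

/-- Delete the first and last step of a Dyck path and encode the remaining steps
pairwise. -/
def encode (l : List StepUD) : List Step2 :=
  encodePairs (l.drop 1).dropLast

namespace DyckMotzkin

/-- Decode a Motzkin step into a pair of Dyck steps. -/
def decodeStep : Step2 → List StepUD
  | .up => [.up, .up]
  | .down => [.down, .down]
  | .level .red => [.up, .down]
  | .level .green => [.down, .up]

def decodePairs : List Step2 → List StepUD
  | [] => []
  | s :: rest => decodeStep s ++ decodePairs rest

def decode (m : List Step2) : List StepUD := .up :: (decodePairs m ++ [.down])

lemma encode_decodePairs : ∀ m, encodePairs (decodePairs m) = m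
  | [] => rfl
  | s :: rest => by
    cases s with
    | up => simp [decodePairs, decodeStep, encodePairs, encodePair, encode_decodePairs rest]
    | down => simp [decodePairs, decodeStep, encodePairs, encodePair, encode_decodePairs rest]
    | level c =>
      cases c <;> simp [decodePairs, decodeStep, encodePairs, encodePair, encode_decodePairs rest]

lemma decode_encodePairs : ∀ l : List StepUD, l.length % 2 = 0 →
    decodePairs (encodePairs l) = l
  | [], _ => rfl
  | [a], h => by simp at h
  | a :: b :: rest, h => by
    have h' : rest.length % 2 = 0 := by simp [List.length_cons] at h; omega
    cases a <;> cases b <;>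
      simp [encodePairs, encodePair, decodePairs, decodeStep, decode_encodePairs rest h']

lemma sum_decodePairs : ∀ m, ((decodePairs m).map StepUD.val).sum = 2 * (m.map Step2.val).sum
  | [] => rfl
  | s :: rest => by
    cases s with
    | up => simp [decodePairs, decodeStep, sum_decodePairs rest, Step2.val, StepUD.val]; ring
    | down => simp [decodePairs, decodeStep, sum_decodePairs rest, Step2.val, StepUD.val]; ring
    | level c =>
      cases c <;>
        simp [decodePairs, decodeStep, sum_decodePairs rest, Step2.val, StepUD.val] <;> ring

lemma length_decodePairs : ∀ m, (decodePairs m).length = 2 * m.length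
  | [] => rfl
  | s :: rest => by
    cases s with
    | up => simp [decodePairs, decodeStep, length_decodePairs rest]; ring
    | down => simp [decodePairs, decodeStep, length_decodePairs rest]; ring
    | level c =>
      cases c <;> simp [decodePairs, decodeStep, length_decodePairs rest] <;> ring

lemma length_encodePairs (l : List StepUD) (h : l.length % 2 = 0) :
    2 * (encodePairs l).length = l.length := by
  conv_rhs => rw [← decode_encodePairs l h]
  rw [length_decodePairs]

lemma sum_encodePairs (l : List StepUD) (h : l.length % 2 = 0) :
    2 * ((encodePairs l).map Step2.val).sum = (l.map StepUD.val).sum := by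
  conv_rhs => rw [← decode_encodePairs l h]
  rw [sum_decodePairs]

lemma prefix_encodePairs : ∀ (l : List StepUD) (t : List Step2), t <+: encodePairs l →
    ∃ s, s <+: l ∧ (s.map StepUD.val).sum = 2 * (t.map Step2.val).sum
  | [], t, h => by
    simp [encodePairs] at h
    exact ⟨[], by simp [h]⟩
  | [a], t, h => by
    simp [encodePairs] at h
    exact ⟨[], by simp [h]⟩
  | a :: b :: rest, t, h => by
    rw [show encodePairs (a :: b :: rest) = encodePair a b :: encodePairs rest from rfl] at h
    match t with
    | [] => exact ⟨[], by simp⟩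
    | x :: t' =>
      rw [List.cons_prefix_cons] at h
      obtain ⟨rfl, ht'⟩ := h
      obtain ⟨s, hs, hsum⟩ := prefix_encodePairs rest t' ht'
      refine ⟨a :: b :: s, by
        rw [List.cons_prefix_cons]
        exact ⟨rfl, by rw [List.cons_prefix_cons]; exact ⟨rfl, hs⟩⟩, ?_⟩
      cases a <;> cases b <;> simp [encodePair, Step2.val, StepUD.val, hsum] <;> ring

lemma prefix_decodePairs : ∀ (m : List Step2) (t : List StepUD), t <+: decodePairs m →
    ∃ s, s <+: m ∧ 2 * (s.map Step2.val).sum - 1 ≤ (t.map StepUD.val).sum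
  | [], t, h => by
    simp [decodePairs] at h
    exact ⟨[], by simp [h]⟩
  | x :: rest, t, h => by
    have hx : ∃ a b, decodeStep x = [a, b] ∧ a.val + b.val = 2 * x.val ∧ (-1 : ℤ) ≤ a.val := by
      cases x with
      | up => exact ⟨.up, .up, rfl, by simp [Step2.val, StepUD.val], by simp [StepUD.val]⟩
      | down => exact ⟨.down, .down, rfl, by simp [Step2.val, StepUD.val], by simp [StepUD.val]⟩
      | level c =>
        cases c with
        | red => exact ⟨.up, .down, rfl, by simp [Step2.val, StepUD.val], by simp [StepUD.val]⟩
        | green => exact ⟨.down, .up, rfl, by simp [Step2.val, StepUD.val], by simp [StepUD.val]⟩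
    obtain ⟨a, b, hab, habsum, ha⟩ := hx
    rw [show decodePairs (x :: rest) = decodeStep x ++ decodePairs rest from rfl, hab] at h
    match t with
    | [] => exact ⟨[], by simp⟩
    | [c] =>
      have : c = a := by
        rw [show ([a, b] : List StepUD) ++ decodePairs rest = a :: (b :: decodePairs rest) from rfl,
          List.cons_prefix_cons] at h
        exact h.1
      subst this
      exact ⟨[], by simp, by simpa using ha⟩
    | c :: d :: t' =>
      rw [show ([a, b] : List StepUD) ++ decodePairs rest = a :: (b :: decodePairs rest) from rfl,
        List.cons_prefix_cons] at h
      obtain ⟨rfl, h⟩ := h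
      rw [List.cons_prefix_cons] at h
      obtain ⟨rfl, h⟩ := h
      obtain ⟨s, hs, hsum⟩ := prefix_decodePairs rest t' h
      refine ⟨x :: s, by rw [List.cons_prefix_cons]; exact ⟨rfl, hs⟩, ?_⟩
      simp only [List.map_cons, List.sum_cons]
      omega

lemma dyck_decomp (n : ℕ) (hn : 1 ≤ n) (l : List StepUD) (hlen : l.length = 2 * n)
    (h : IsDyck l) :
    ∃ mid, l = .up :: mid ++ [.down] ∧ mid.length = 2 * n - 2 := by
  obtain ⟨hpre, hsum⟩ := h
  have hne : l ≠ [] := by intro hl; simp [hl] at hlen; omega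
  -- first step is up
  obtain ⟨a, l', rfl⟩ := List.exists_cons_of_ne_nil hne
  have ha : a = .up := by
    have := hpre [a] ⟨l', rfl⟩
    cases a with
    | up => rfl
    | down => simp [StepUD.val] at this
  subst ha
  have hl'ne : l' ≠ [] := by intro hl; simp [hl] at hlen; omega
  -- last step is down
  have hdec : l' = l'.dropLast ++ [l'.getLast hl'ne] := (List.dropLast_append_getLast hl'ne).symm
  have hlast : l'.getLast hl'ne = .down := by
    have hp : (StepUD.up :: l'.dropLast) <+: (StepUD.up :: l') := by
      rw [List.cons_prefix_cons]
      exact ⟨rfl, List.dropLast_prefix l'⟩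
    have h1 := hpre _ hp
    have h2 : ((StepUD.up :: (l'.dropLast ++ [l'.getLast hl'ne])).map StepUD.val).sum = 0 := by
      have h3 := congrArg (fun t => ((StepUD.up :: t).map StepUD.val).sum) hdec
      exact h3 ▸ hsum
    cases hl : l'.getLast hl'ne with
    | down => rfl
    | up =>
      rw [hl] at h2
      simp [StepUD.val] at h1 h2
      omega
  refine ⟨l'.dropLast, ?_, ?_⟩
  · rw [← hlast]; exact congrArg _ hdec
  · have : l'.length = 2 * n - 1 := by simp at hlen; omega
    simp [List.length_dropLast, this]
    omega

theorem main (n : ℕ) (hn : 1 ≤ n) :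
    ∃ e : {l : List StepUD // l.length = 2 * n ∧ IsDyck l} ≃
        {l : List Step2 // l.length = n - 1 ∧ IsMotzkin2 l},
      ∀ d : {l : List StepUD // l.length = 2 * n ∧ IsDyck l},
        (e d : List Step2) = encode (d : List StepUD) := by
  have fwd : ∀ l : List StepUD, l.length = 2 * n → IsDyck l →
      (encode l).length = n - 1 ∧ IsMotzkin2 (encode l) := by
    intro l hlen hd
    obtain ⟨mid, rfl, hmidlen⟩ := dyck_decomp n hn l hlen hd
    have hmid2 : mid.length % 2 = 0 := by omega
    have hencode : encode (StepUD.up :: mid ++ [StepUD.down]) = encodePairs mid := by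
      simp [encode]
    obtain ⟨hpre, hsum⟩ := hd
    have hmidsum : (mid.map StepUD.val).sum = 0 := by
      simp [StepUD.val] at hsum; omega
    rw [hencode]
    refine ⟨?_, ?_, ?_⟩
    · have := length_encodePairs mid hmid2; omega
    · intro t ht
      obtain ⟨s, hs, hseq⟩ := prefix_encodePairs mid t ht
      have hps : (StepUD.up :: s) <+: (StepUD.up :: mid ++ [StepUD.down]) :=
        (List.cons_prefix_cons.2 ⟨rfl, hs⟩).trans (List.prefix_append _ _)
      have := hpre _ hps
      simp [StepUD.val] at this
      omega
    · have := sum_encodePairs mid hmid2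
      omega
  have bwd : ∀ m : List Step2, m.length = n - 1 → IsMotzkin2 m →
      (decode m).length = 2 * n ∧ IsDyck (decode m) := by
    intro m hmlen hm
    obtain ⟨hpre, hsum⟩ := hm
    refine ⟨?_, ?_, ?_⟩
    · simp [decode, length_decodePairs, hmlen]; omega
    · intro t ht
      match t with
      | [] => simp
      | c :: t' =>
        rw [show decode m = StepUD.up :: (decodePairs m ++ [StepUD.down]) from rfl,
          List.cons_prefix_cons] at ht
        obtain ⟨rfl, ht'⟩ := ht
        rw [List.prefix_concat_iff] at ht'
        have hsum' : (-1 : ℤ) ≤ (t'.map StepUD.val).sum := by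
          rcases ht' with rfl | ht'
          · simp [sum_decodePairs, hsum, StepUD.val]
          · obtain ⟨s, hs, hle⟩ := prefix_decodePairs m t' ht'
            have := hpre s hs
            omega
        simp [StepUD.val]
        omega
    · simp [decode, sum_decodePairs, hsum, StepUD.val]
  refine ⟨{
    toFun := fun d => ⟨encode d.1, fwd d.1 d.2.1 d.2.2⟩
    invFun := fun m => ⟨decode m.1, bwd m.1 m.2.1 m.2.2⟩
    left_inv := ?_
    right_inv := ?_ }, fun d => rfl⟩
  · rintro ⟨l, hlen, hd⟩
    obtain ⟨mid, rfl, hmidlen⟩ := dyck_decomp n hn l hlen hd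
    have hmid2 : mid.length % 2 = 0 := by omega
    apply Subtype.ext
    show decode (encode _) = _
    have hencode : encode (StepUD.up :: mid ++ [StepUD.down]) = encodePairs mid := by
      simp [encode]
    rw [hencode]
    simp [decode, decode_encodePairs mid hmid2]
  · rintro ⟨m, hmlen, hm⟩
    apply Subtype.ext
    show encode (decode m) = m
    simp [decode, encode, encode_decodePairs]

end DyckMotzkin

/-- For every `n ≥ 1`, deleting the first up-step and the last down-step and
encoding the remaining `2n - 2` steps pairwise (up-up ↦ up, down-down ↦ down,
up-down ↦ red, down-up ↦ green) is a bijection between Dyck paths of length `2n`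
and 2-coloured Motzkin paths of length `n - 1`. -/
theorem dyck_equiv_motzkin2 (n : ℕ) (hn : 1 ≤ n) :
    ∃ e : {l : List StepUD // l.length = 2 * n ∧ IsDyck l} ≃
        {l : List Step2 // l.length = n - 1 ∧ IsMotzkin2 l},
      ∀ d : {l : List StepUD // l.length = 2 * n ∧ IsDyck l},
        (e d : List Step2) = encode (d : List StepUD) := by
  exact DyckMotzkin.main n hn
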